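/- arXiv:2508.08188 — 4 statements merged into one kernel-verified Lean document; each statement's English description precedes it below -/
import Mathlib

section
/- (Lemma 1, decoupling of independent detectors.) For every r ∈ ℕ, every list of detector values D₁, …, D_r ∈ G, and every ρ ∈ M with Π₀ * ρ * Π₀ = ρ, one has ∑_{s¹,s³,…,s^{2r-1} ∈ G} (I_{D_r + s^{2r-1}} ∘ I_{s^{2r-1}} ∘ ⋯ ∘ I_{D₁ + s¹} ∘ I_{s¹})(ρ) = (E^{D_r} ∘ ⋯ ∘ E^{D₂} ∘ E^{D₁})(ρ), i.e. the sum over all odd-round syndrome outcomes of the composition of 2r noisy syndrome-extraction instruments, with consecutive pairs constrained to have parities D₁,…,D_r, equals the composition of the detector error channels E^{D_r}∘⋯∘E^{D₁}. -/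
/-!
Call `σ` block diagonal when it is fixed by the pinching `σ ↦ ∑ a, Π_a σ Π_a`. The state `ρ` is,
and by the support law so is every output of an instrument. On a block-diagonal `σ` the
propagation law gives
`I_{D+s} (I_s σ) = ∑ m₁ m₂, P^{m₂} (P^{m₁}_{D+m₁+m₂} (Π_{m₁+s} σ Π_{m₁+s}))`,
where `s` has dropped out of the parity because `s + s = 0`; summing over `s` then undoes the
pinching and leaves `E^D σ`. As each pair of rounds keeps the state block diagonal and has its
own outcome, the sum over all outcomes factors pair by pair.
-/

section BlockDiagonal

variable {ι A : Type*} [Fintype ι]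

def IsBlockDiagonal [NonUnitalNonAssocSemiring A] (e : ι → A) (x : A) : Prop :=
  ∑ i, e i * x * e i = x

theorem IsBlockDiagonal.sum [NonUnitalNonAssocSemiring A] {e : ι → A} {κ : Type*}
    {t : Finset κ} {f : κ → A} (hf : ∀ j ∈ t, IsBlockDiagonal e (f j)) :
    IsBlockDiagonal e (∑ j ∈ t, f j) := by
  unfold IsBlockDiagonal at *
  simp_rw [Finset.mul_sum, Finset.sum_mul]
  rw [Finset.sum_comm]
  exact Finset.sum_congr rfl hf

variable [Semiring A] {e : ι → A}

theorem OrthogonalIdempotents.isBlockDiagonal_mul_mul (he : OrthogonalIdempotents e)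
    (i : ι) (x : A) : IsBlockDiagonal e (e i * x * e i) := by
  refine (Finset.sum_eq_single i (fun j _ hji => ?_) (by simp)).trans ?_
  · calc e j * (e i * x * e i) * e j = e j * e i * x * (e i * e j) := by noncomm_ring
      _ = 0 := by rw [he.ortho hji, zero_mul, zero_mul]
  · calc e i * (e i * x * e i) * e i = e i * e i * x * (e i * e i) := by noncomm_ring
      _ = e i * x * e i := by rw [(he.idem i).eq]

theorem OrthogonalIdempotents.isBlockDiagonal_of_mul_mul_eq (he : OrthogonalIdempotents e)
    {i : ι} {x : A} (hx : e i * x * e i = x) : IsBlockDiagonal e x :=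
  hx ▸ he.isBlockDiagonal_mul_mul i x

end BlockDiagonal

theorem sum_prod_ofFn_reverse_apply_eq {R M G : Type*} [Semiring R] [AddCommMonoid M]
    [Module R M] [Fintype G] (S : Set M) :
    ∀ (r : ℕ) (J : Fin r → G → Module.End R M) (F : Fin r → Module.End R M),
      (∀ i g, Set.MapsTo (J i g) S S) → (∀ i, ∀ σ ∈ S, ∑ g, J i g σ = F i σ) →
      ∀ σ ∈ S, ∑ s : Fin r → G, ((List.ofFn fun i => J i (s i)).reverse).prod σ
        = ((List.ofFn F).reverse).prod σ
  | 0, _, _, _, _, _, _ => by simp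
  | r + 1, J, F, hJ, hF, σ, hσ => by
    simp only [← (Fin.consEquiv fun _ => G).sum_comp, Fintype.sum_prod_type,
      Fin.consEquiv_apply, List.ofFn_succ, Fin.cons_zero, Fin.cons_succ, List.reverse_cons,
      List.prod_append, List.prod_cons, List.prod_nil, mul_one, Module.End.mul_apply]
    calc ∑ g, ∑ s : Fin r → G, ((List.ofFn fun i => J i.succ (s i)).reverse).prod (J 0 g σ)
        = ∑ g, ((List.ofFn fun i => F i.succ).reverse).prod (J 0 g σ) :=
          Finset.sum_congr rfl fun g _ => sum_prod_ofFn_reverse_apply_eq S r _ _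
            (fun i => hJ i.succ) (fun i => hF i.succ) _ (hJ 0 g hσ)
      _ = ((List.ofFn fun i => F i.succ).reverse).prod (F 0 σ) := by
          rw [← map_sum, hF 0 σ hσ]

section SyndromeExtraction

variable {R A G : Type*} [Semiring R] [Semiring A] [Module R A] [AddCommGroup G] [Fintype G]
  {Pr : G → A} {P : G → G → Module.End R A} {Ptot I E : G → Module.End R A}

theorem isBlockDiagonal_instrument (hPr : OrthogonalIdempotents Pr)
    (hPtot : ∀ m, Ptot m = ∑ e, P m e)
    (hSupp : ∀ m e a σ,
      P m e (Pr a * σ * Pr a) = Pr (a + e) * (P m e (Pr a * σ * Pr a)) * Pr (a + e))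
    (hI : ∀ s σ, I s σ = ∑ m, Ptot m (Pr (m + s) * σ * Pr (m + s))) (s : G) (σ : A) :
    IsBlockDiagonal Pr (I s σ) := by
  rw [hI]
  refine IsBlockDiagonal.sum fun m _ => ?_
  rw [hPtot, LinearMap.sum_apply]
  exact IsBlockDiagonal.sum fun e _ => hPr.isBlockDiagonal_of_mul_mul_eq (hSupp _ _ _ _).symm

theorem mul_instrument_mul
    (hProp : ∀ m a b σ,
      Pr b * (Ptot m (Pr a * σ * Pr a)) * Pr b = P m (a + b) (Pr a * σ * Pr a))
    (hI : ∀ s σ, I s σ = ∑ m, Ptot m (Pr (m + s) * σ * Pr (m + s))) (b s : G) (σ : A) :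
    Pr b * I s σ * Pr b = ∑ m, P m (m + s + b) (Pr (m + s) * σ * Pr (m + s)) := by
  simp only [hI, Finset.mul_sum, Finset.sum_mul, hProp]

theorem sum_instrument_instrument [Module (ZMod 2) G]
    (hProp : ∀ m a b σ,
      Pr b * (Ptot m (Pr a * σ * Pr a)) * Pr b = P m (a + b) (Pr a * σ * Pr a))
    (hI : ∀ s σ, I s σ = ∑ m, Ptot m (Pr (m + s) * σ * Pr (m + s)))
    (hE : ∀ D σ, E D σ = ∑ m₁, ∑ m₂, Ptot m₂ (P m₁ (D + m₁ + m₂) σ))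
    {σ : A} (hσ : IsBlockDiagonal Pr σ) (D : G) :
    ∑ s, I (D + s) (I s σ) = E D σ := by
  have parity (m m' s : G) : m + s + (m' + (D + s)) = D + m + m' := by
    rw [show m + s + (m' + (D + s)) = D + m + m' + (s + s) by abel, ZModModule.add_self,
      add_zero]
  have hσ_shift (m : G) : ∑ s, Pr (m + s) * σ * Pr (m + s) = σ :=
    (Equiv.sum_comp (Equiv.addLeft m) fun a => Pr a * σ * Pr a).trans hσ
  calc ∑ s, I (D + s) (I s σ)
      = ∑ s, ∑ m', ∑ m, Ptot m' (P m (D + m + m') (Pr (m + s) * σ * Pr (m + s))) := by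
        simp only [hI (D + _), mul_instrument_mul hProp hI, parity, map_sum]
    _ = ∑ m', ∑ m, Ptot m' (P m (D + m + m') σ) := by
        rw [Finset.sum_comm]
        refine Finset.sum_congr rfl fun m' _ => ?_
        rw [Finset.sum_comm]
        refine Finset.sum_congr rfl fun m _ => ?_
        rw [← map_sum, ← map_sum, hσ_shift]
    _ = E D σ := by rw [hE, Finset.sum_comm]

end SyndromeExtraction

open Matrix

theorem detector_decoupling_general (d k : ℕ)
    (Pr : (Fin k → ZMod 2) → Matrix (Fin d) (Fin d) ℂ)
    (hOrth : ∀ a b, a ≠ b → Pr a * Pr b = 0)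
    (hIdem : ∀ a, Pr a * Pr a = Pr a)
    (P : (Fin k → ZMod 2) → (Fin k → ZMod 2) →
      Module.End ℂ (Matrix (Fin d) (Fin d) ℂ))
    (Ptot : (Fin k → ZMod 2) → Module.End ℂ (Matrix (Fin d) (Fin d) ℂ))
    (hPtot : ∀ m, Ptot m = ∑ e, P m e)
    (hProp : ∀ m a b σ,
      Pr b * (Ptot m (Pr a * σ * Pr a)) * Pr b = P m (a + b) (Pr a * σ * Pr a))
    (hSupp : ∀ m e a σ,
      P m e (Pr a * σ * Pr a)
        = Pr (a + e) * (P m e (Pr a * σ * Pr a)) * Pr (a + e))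
    (I : (Fin k → ZMod 2) → Module.End ℂ (Matrix (Fin d) (Fin d) ℂ))
    (hI : ∀ s σ, I s σ = ∑ m, Ptot m (Pr (m + s) * σ * Pr (m + s)))
    (E : (Fin k → ZMod 2) → Module.End ℂ (Matrix (Fin d) (Fin d) ℂ))
    (hE : ∀ D σ, E D σ = ∑ m₁, ∑ m₂, Ptot m₂ (P m₁ (D + m₁ + m₂) σ))
    (r : ℕ) (D : Fin r → (Fin k → ZMod 2))
    (ρ : Matrix (Fin d) (Fin d) ℂ) (hρ : Pr 0 * ρ * Pr 0 = ρ) :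
    ∑ s : Fin r → (Fin k → ZMod 2),
        ((List.ofFn fun i => I (D i + s i) * I (s i)).reverse).prod ρ
      = ((List.ofFn fun i => E (D i)).reverse).prod ρ := by
  have hPr : OrthogonalIdempotents Pr := ⟨hIdem, fun a b => hOrth a b⟩
  exact sum_prod_ofFn_reverse_apply_eq {σ | IsBlockDiagonal Pr σ} r
    (fun i s => I (D i + s) * I s) (fun i => E (D i))
    (fun _ _ _ _ => isBlockDiagonal_instrument hPr hPtot hSupp hI _ _)
    (fun i _ hσ => sum_instrument_instrument hProp hI hE hσ (D i))
    ρ (hPr.isBlockDiagonal_of_mul_mul_eq hρ)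

/-- Lemma 1 (decoupling of independent detectors): for a codespace-supported
state `ρ`, summing the composition of `2r` noisy syndrome-extraction
instruments over all odd-round syndrome outcomes, with consecutive pairs
constrained to have parities `D₁, …, D_r`, yields the composition of the
detector error channels `E^{D_r} ∘ ⋯ ∘ E^{D₁}`. -/
theorem detector_decoupling (d k : ℕ)
    (Pr : (Fin k → ZMod 2) → Matrix (Fin d) (Fin d) ℂ)
    (hHerm : ∀ a, (Pr a).IsHermitian)
    (hOrth : ∀ a b, a ≠ b → Pr a * Pr b = 0)
    (hIdem : ∀ a, Pr a * Pr a = Pr a)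
    (hSum : ∑ a, Pr a = 1)
    (P : (Fin k → ZMod 2) → (Fin k → ZMod 2) →
      Module.End ℂ (Matrix (Fin d) (Fin d) ℂ))
    (Ptot : (Fin k → ZMod 2) → Module.End ℂ (Matrix (Fin d) (Fin d) ℂ))
    (hPtot : ∀ m, Ptot m = ∑ e, P m e)
    (hProp : ∀ m a b σ,
      Pr b * (Ptot m (Pr a * σ * Pr a)) * Pr b = P m (a + b) (Pr a * σ * Pr a))
    (hSupp : ∀ m e a σ,
      P m e (Pr a * σ * Pr a)
        = Pr (a + e) * (P m e (Pr a * σ * Pr a)) * Pr (a + e))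
    (I : (Fin k → ZMod 2) → Module.End ℂ (Matrix (Fin d) (Fin d) ℂ))
    (hI : ∀ s σ, I s σ = ∑ m, Ptot m (Pr (m + s) * σ * Pr (m + s)))
    (E : (Fin k → ZMod 2) → Module.End ℂ (Matrix (Fin d) (Fin d) ℂ))
    (hE : ∀ D σ, E D σ = ∑ m₁, ∑ m₂, Ptot m₂ (P m₁ (D + m₁ + m₂) σ))
    (r : ℕ) (D : Fin r → (Fin k → ZMod 2))
    (ρ : Matrix (Fin d) (Fin d) ℂ) (hρ : Pr 0 * ρ * Pr 0 = ρ) :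
    ∑ s : Fin r → (Fin k → ZMod 2),
        ((List.ofFn fun i => I (D i + s i) * I (s i)).reverse).prod ρ
      = ((List.ofFn fun i => E (D i)).reverse).prod ρ :=
  detector_decoupling_general d k Pr hOrth hIdem P Ptot hPtot hProp hSupp I hI E hE r D ρ hρ
end

section
/- (Detector error channel for a pair of syndrome-extraction gadgets.) For every detector value D ∈ G and every ρ ∈ M with Π₀ * ρ * Π₀ = ρ, one has ∑_{s∈G} I_{D+s}(I_s(ρ)) = ∑_{m₁,m₂ ∈ G} P^{m₂}(P^{m₁}_{D+m₁+m₂}(ρ)); that is, the sum over all pairs of syndrome outcomes with parity D of two composed noisy syndrome-extraction instruments applied to a codespace-supported state equals the detector error channel E^D(ρ), which depends only on the internal errors and the detector value D. -/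
/-!
On a codespace state `ρ = Π₀ ρ Π₀`, only the term `m = s` of the instrument `I_s` survives
(the projector `Π_{m+s}` must be `Π₀`), so `I_s ρ = P^s ρ`. The second instrument then
projects `P^s ρ` onto syndrome `m + D + s`, which by the propagation law is `P^s_{D+s+m} ρ`.
-/

namespace OrthogonalIdempotents

variable {R ι : Type*} [Semiring R] [DecidableEq ι] {e : ι → R}

lemma mul_mul_eq_ite_of_corner (he : OrthogonalIdempotents e) {x : R} {j : ι}
    (hx : e j * x * e j = x) (i : ι) :
    e i * x * e i = if i = j then x else 0 := by
  calc e i * x * e i = (e i * e j) * x * (e j * e i) := by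
        conv_lhs => rw [← hx]
        simp only [mul_assoc]
    _ = if i = j then x else 0 := by
        by_cases hij : i = j
        · subst hij; simp [he.mul_eq, hx]
        · simp [he.mul_eq, hij, Ne.symm hij]

lemma sum_apply_corner_add_of_corner_zero {𝕜 G : Type*} [CommSemiring 𝕜] [Module 𝕜 R]
    [AddGroup G] [Fintype G] [DecidableEq G] {e : G → R} (he : OrthogonalIdempotents e)
    (Φ : G → Module.End 𝕜 R) {x : R} (hx : e 0 * x * e 0 = x) (s : G) :
    ∑ m, Φ m (e (m + s) * x * e (m + s)) = Φ (-s) x := by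
  rw [Finset.sum_eq_single (-s)]
  · rw [neg_add_cancel, hx]
  · intro m _ hm
    rw [he.mul_mul_eq_ite_of_corner hx, if_neg (by rwa [add_eq_zero_iff_eq_neg]), map_zero]
  · exact fun h => absurd (Finset.mem_univ _) h

end OrthogonalIdempotents

theorem detector_pair_channel_general (d k : ℕ)
    (Pr : (Fin k → ZMod 2) → Matrix (Fin d) (Fin d) ℂ)
    (hOrth : ∀ a b, a ≠ b → Pr a * Pr b = 0)
    (hIdem : ∀ a, Pr a * Pr a = Pr a)
    (P : (Fin k → ZMod 2) → (Fin k → ZMod 2) →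
      Module.End ℂ (Matrix (Fin d) (Fin d) ℂ))
    (Ptot : (Fin k → ZMod 2) → Module.End ℂ (Matrix (Fin d) (Fin d) ℂ))
    (hProp : ∀ m a b σ,
      Pr b * (Ptot m (Pr a * σ * Pr a)) * Pr b = P m (a + b) (Pr a * σ * Pr a))
    (I : (Fin k → ZMod 2) → Module.End ℂ (Matrix (Fin d) (Fin d) ℂ))
    (hI : ∀ s σ, I s σ = ∑ m, Ptot m (Pr (m + s) * σ * Pr (m + s)))
    (D : Fin k → ZMod 2)
    (ρ : Matrix (Fin d) (Fin d) ℂ) (hρ : Pr 0 * ρ * Pr 0 = ρ) :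
    ∑ s, I (D + s) (I s ρ) = ∑ m₁, ∑ m₂, Ptot m₂ (P m₁ (D + m₁ + m₂) ρ) := by
  have he : OrthogonalIdempotents Pr := ⟨hIdem, fun a b hab => hOrth a b hab⟩
  have hneg (s : Fin k → ZMod 2) : -s = s := funext fun i => ZMod.neg_eq_self_mod_two (s i)
  have hIρ (s) : I s ρ = Ptot s ρ := by
    rw [hI, he.sum_apply_corner_add_of_corner_zero Ptot hρ, hneg]
  have hsyndrome (m b) : Pr b * Ptot m ρ * Pr b = P m b ρ := by
    simpa only [hρ, zero_add] using hProp m 0 b ρ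
  calc ∑ s, I (D + s) (I s ρ)
      = ∑ s, ∑ m, Ptot m (Pr (m + (D + s)) * Ptot s ρ * Pr (m + (D + s))) := by
        simp only [hIρ, hI]
    _ = ∑ m₁, ∑ m₂, Ptot m₂ (P m₁ (D + m₁ + m₂) ρ) := by
        simp only [hsyndrome, add_comm _ (D + _)]

/-- Detector error channel for a pair of syndrome-extraction gadgets: on a
codespace-supported state `ρ`, the sum over all pairs of syndrome outcomes with
parity `D` of two composed noisy syndrome-extraction instruments equals the
detector error channel `E^D(ρ) = ∑_{m₁,m₂} P^{m₂}(P^{m₁}_{D+m₁+m₂}(ρ))`. -/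
theorem detector_pair_channel (d k : ℕ)
    (Pr : (Fin k → ZMod 2) → Matrix (Fin d) (Fin d) ℂ)
    (hHerm : ∀ a, (Pr a).IsHermitian)
    (hOrth : ∀ a b, a ≠ b → Pr a * Pr b = 0)
    (hIdem : ∀ a, Pr a * Pr a = Pr a)
    (hSum : ∑ a, Pr a = 1)
    (P : (Fin k → ZMod 2) → (Fin k → ZMod 2) →
      Module.End ℂ (Matrix (Fin d) (Fin d) ℂ))
    (Ptot : (Fin k → ZMod 2) → Module.End ℂ (Matrix (Fin d) (Fin d) ℂ))
    (hPtot : ∀ m, Ptot m = ∑ e, P m e)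
    (hProp : ∀ m a b σ,
      Pr b * (Ptot m (Pr a * σ * Pr a)) * Pr b = P m (a + b) (Pr a * σ * Pr a))
    (hSupp : ∀ m e a σ,
      P m e (Pr a * σ * Pr a)
        = Pr (a + e) * (P m e (Pr a * σ * Pr a)) * Pr (a + e))
    (I : (Fin k → ZMod 2) → Module.End ℂ (Matrix (Fin d) (Fin d) ℂ))
    (hI : ∀ s σ, I s σ = ∑ m, Ptot m (Pr (m + s) * σ * Pr (m + s)))
    (D : Fin k → ZMod 2)
    (ρ : Matrix (Fin d) (Fin d) ℂ) (hρ : Pr 0 * ρ * Pr 0 = ρ) :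
    ∑ s, I (D + s) (I s ρ) = ∑ m₁, ∑ m₂, Ptot m₂ (P m₁ (D + m₁ + m₂) ρ) :=
  detector_pair_channel_general d k Pr hOrth hIdem P Ptot hProp I hI D ρ hρ
end

section
/- (Lemma 3, error probabilities up to stabilizers from normalizer eigenvalues.) Let S be an arbitrary submodule (subgroup) of V and let N := {Q ∈ V | ∀ s ∈ S, ω(s, Q) = 0} be its ω-orthogonal complement (the normalizer). Then for every P ∈ V, the coset-averaged probability satisfies (1 / |S|) · ∑_{s ∈ S} p(P + s) = (1 / 4^n) · ∑_{Q ∈ N} λ(Q) · χ(ω(P, Q)). In particular the coset probabilities p(P·S) are determined by the channel eigenvalues λ(Q) for Q ranging only over operators commuting with all elements of the stabilizer group. -/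
open Finset Classical

/-- `χ(x) = (-1)^x` for `x ∈ ZMod 2`. -/
def chi (x : ZMod 2) : ℝ := (-1 : ℝ) ^ x.val

/-- The symplectic form on `𝔽₂²ⁿ` representing commutation of Pauli
operators: `ω((a,b),(c,d)) = ∑ᵢ (aᵢ dᵢ + bᵢ cᵢ)`. -/
def omega {n : ℕ} (v w : (Fin n → ZMod 2) × (Fin n → ZMod 2)) : ZMod 2 :=
  ∑ i, (v.1 i * w.2 i + v.2 i * w.1 i)

lemma zmod2_cases (x : ZMod 2) : x = 0 ∨ x = 1 := by revert x; decide

lemma chi_zero : chi 0 = 1 := by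
  rw [chi, show (0 : ZMod 2).val = 0 from rfl, pow_zero]

lemma chi_one : chi 1 = -1 := by
  rw [chi, show (1 : ZMod 2).val = 1 from rfl, pow_one]

lemma chi_add (x y : ZMod 2) : chi (x + y) = chi x * chi y := by
  rcases zmod2_cases x with hx | hx <;> rcases zmod2_cases y with hy | hy <;>
    subst hx <;> subst hy <;>
    simp [chi_zero, chi_one, show (1 + 1 : ZMod 2) = 0 from by decide]

lemma chi_add_one (x : ZMod 2) : chi (x + 1) = -chi x := by
  rcases zmod2_cases x with hx | hx <;> subst hx <;>
    simp [chi_zero, chi_one, show (1 + 1 : ZMod 2) = 0 from by decide]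

lemma omega_comm {n : ℕ} (v w : (Fin n → ZMod 2) × (Fin n → ZMod 2)) :
    omega v w = omega w v := by
  unfold omega; exact Finset.sum_congr rfl fun i _ => by ring

lemma omega_add_left {n : ℕ} (v v' w : (Fin n → ZMod 2) × (Fin n → ZMod 2)) :
    omega (v + v') w = omega v w + omega v' w := by
  unfold omega
  rw [← Finset.sum_add_distrib]
  exact Finset.sum_congr rfl fun i _ => by
    simp only [Prod.fst_add, Prod.snd_add, Pi.add_apply]; ring

lemma omega_smul_left {n : ℕ} (c : ZMod 2) (v w : (Fin n → ZMod 2) × (Fin n → ZMod 2)) :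
    omega (c • v) w = c * omega v w := by
  unfold omega
  rw [Finset.mul_sum]
  exact Finset.sum_congr rfl fun i _ => by
    simp only [Prod.smul_fst, Prod.smul_snd, Pi.smul_apply, smul_eq_mul]; ring

/-- `omega` as a bilinear form. -/
noncomputable def Bform (n : ℕ) :
    LinearMap.BilinForm (ZMod 2) ((Fin n → ZMod 2) × (Fin n → ZMod 2)) :=
  LinearMap.mk₂ (ZMod 2) omega
    (fun v v' w => omega_add_left v v' w)
    (fun c v w => by rw [omega_smul_left, smul_eq_mul])
    (fun v w w' => by rw [omega_comm, omega_add_left, omega_comm w, omega_comm w'])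
    (fun c v w => by rw [omega_comm, omega_smul_left, omega_comm, smul_eq_mul])

lemma Bform_apply {n : ℕ} (v w : (Fin n → ZMod 2) × (Fin n → ZMod 2)) :
    Bform n v w = omega v w := rfl

lemma Bform_refl (n : ℕ) : (Bform n).IsRefl := by
  intro v w h
  rwa [Bform_apply, omega_comm, ← Bform_apply]

lemma Bform_nondeg (n : ℕ) : (Bform n).Nondegenerate := by
  refine (LinearMap.IsRefl.nondegenerate_iff_separatingLeft (Bform_refl n)).mpr ?_
  intro v hv
  have h1 : ∀ i, v.1 i = 0 := fun i => by
    have := hv (0, Pi.single i 1)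
    simpa [Bform_apply, omega, Pi.single_apply, Finset.sum_ite_eq'] using this
  have h2 : ∀ i, v.2 i = 0 := fun i => by
    have := hv (Pi.single i 1, 0)
    simpa [Bform_apply, omega, Pi.single_apply, Finset.sum_ite_eq'] using this
  ext i
  · exact h1 i
  · exact h2 i

/-- Character sum over a submodule: `|N|` on the orthogonal complement, `0` off it. -/
lemma char_sum (n : ℕ)
    (N : Submodule (ZMod 2) ((Fin n → ZMod 2) × (Fin n → ZMod 2)))
    (v : (Fin n → ZMod 2) × (Fin n → ZMod 2)) :
    ∑ Q : N, chi (omega v Q) =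
      if v ∈ (Bform n).orthogonal N then (Nat.card N : ℝ) else 0 := by
  split_ifs with h
  · rw [Nat.card_eq_fintype_card]
    rw [Finset.sum_congr rfl (fun Q _ => ?_), Finset.sum_const, Finset.card_univ,
      nsmul_eq_mul, mul_one]
    have h0 : omega v (Q : _) = 0 := by
      have := h Q Q.2
      rwa [Bform_apply, omega_comm] at this
    rw [h0, chi_zero]
  · simp only [LinearMap.BilinForm.mem_orthogonal_iff, not_forall] at h
    obtain ⟨Q₀, hQ₀, hne⟩ := h
    rw [Bform_apply] at hne
    have hQ1 : omega v Q₀ = 1 := by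
      rw [omega_comm]
      rcases zmod2_cases (omega Q₀ v) with h' | h'
      · exact absurd h' hne
      · exact h'
    have key : ∑ Q : N, chi (omega v Q) = ∑ Q : N, -chi (omega v Q) := by
      refine Fintype.sum_equiv (Equiv.addRight (⟨Q₀, hQ₀⟩ : N)) _ _ (fun Q => ?_)
      have hadd : omega v (Q.val + Q₀) = omega v Q.val + omega v Q₀ := by
        rw [omega_comm v (Q.val + Q₀), omega_add_left, omega_comm Q.val v,
          omega_comm Q₀ v]
      show chi (omega v Q) = -chi (omega v ((Q + ⟨Q₀, hQ₀⟩ : N) : _))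
      rw [show (((Q + ⟨Q₀, hQ₀⟩ : N)) : _) = (Q : _) + Q₀ from rfl, hadd, hQ1,
        chi_add_one, neg_neg]
    rw [Finset.sum_neg_distrib] at key
    linarith

/-- Lemma 3 (error probabilities up to stabilizers from normalizer
eigenvalues): for a stabilizer subgroup `S` with normalizer
`N = {Q | ∀ s ∈ S, ω(s,Q) = 0}`, the coset-averaged error probability is
`(1/|S|) ∑_{s∈S} p(P+s) = (1/4ⁿ) ∑_{Q∈N} λ(Q) χ(ω(P,Q))`, where
`λ(Q) = ∑_P p(P) χ(ω(P,Q))` are the Walsh–Hadamard (Pauli channel)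
eigenvalues. -/
theorem coset_probability_from_normalizer_eigenvalues (n : ℕ)
    (p : ((Fin n → ZMod 2) × (Fin n → ZMod 2)) → ℝ)
    (lam : ((Fin n → ZMod 2) × (Fin n → ZMod 2)) → ℝ)
    (hlam : ∀ Q, lam Q = ∑ P, p P * chi (omega P Q))
    (S : Submodule (ZMod 2) ((Fin n → ZMod 2) × (Fin n → ZMod 2)))
    (P : (Fin n → ZMod 2) × (Fin n → ZMod 2)) :
    (1 / (Nat.card S : ℝ)) * ∑ s : S, p (P + s)
      = (1 / (4 ^ n : ℝ)) *
          ∑ Q ∈ univ.filter (fun Q => ∀ s ∈ S, omega s Q = 0),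
            lam Q * chi (omega P Q) := by
  classical
  set N : Submodule (ZMod 2) ((Fin n → ZMod 2) × (Fin n → ZMod 2)) :=
    (Bform n).orthogonal S with hN
  have haddP : ∀ v : (Fin n → ZMod 2) × (Fin n → ZMod 2), v + P + P = v := by
    intro v
    rw [add_assoc, ← two_smul (ZMod 2) P, show (2 : ZMod 2) = 0 from by decide,
      zero_smul, add_zero]
  -- the filtered sum equals the sum over N
  have hfilter : ∑ Q ∈ univ.filter (fun Q => ∀ s ∈ S, omega s Q = 0),
      lam Q * chi (omega P Q) = ∑ Q : N, lam Q * chi (omega P Q) := by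
    refine Finset.sum_subtype _ (fun x => ?_) _
    simp only [Finset.mem_filter, Finset.mem_univ, true_and, hN,
      LinearMap.BilinForm.mem_orthogonal_iff]
    exact Iff.rfl
  have horth : (Bform n).orthogonal N = S :=
    LinearMap.BilinForm.orthogonal_orthogonal (Bform_nondeg n) (Bform_refl n) S
  -- main computation
  have hmain : ∑ Q : N, lam Q * chi (omega P Q)
      = (Nat.card N : ℝ) * ∑ s : S, p (P + s) := by
    calc ∑ Q : N, lam Q * chi (omega P Q)
        = ∑ Q : N, ∑ R, p R * chi (omega (R + P) Q) := by
          refine Finset.sum_congr rfl fun Q _ => ?_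
          rw [hlam, Finset.sum_mul]
          refine Finset.sum_congr rfl fun R _ => ?_
          rw [omega_add_left, chi_add, mul_assoc]
      _ = ∑ R, p R * ∑ Q : N, chi (omega (R + P) Q) := by
          rw [Finset.sum_comm]
          exact Finset.sum_congr rfl fun R _ => by rw [Finset.mul_sum]
      _ = ∑ R, p R * (if R + P ∈ S then (Nat.card N : ℝ) else 0) := by
          refine Finset.sum_congr rfl fun R _ => ?_
          rw [char_sum n N (R + P), horth]
      _ = ∑ R ∈ univ.filter (fun R => R + P ∈ S), p R * (Nat.card N : ℝ) := by
          rw [Finset.sum_filter]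
          exact Finset.sum_congr rfl fun R _ => by split_ifs <;> simp
      _ = (Nat.card N : ℝ) * ∑ s : S, p (P + s) := by
          rw [Finset.mul_sum]
          refine Finset.sum_bij'
            (fun R hR => (⟨R + P, by simpa using hR⟩ : S))
            (fun s _ => s.val + P) ?_ ?_ ?_ ?_ ?_
          · intro R _; exact Finset.mem_univ _
          · intro s _
            simp only [Finset.mem_filter, Finset.mem_univ, true_and]
            rw [haddP]; exact s.2
          · intro R hR; exact haddP R
          · intro s _
            exact Subtype.ext (haddP s.val)
          · intro R hR
            have hPR : P + (R + P) = R := by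
              rw [add_comm P, haddP]
            show p R * _ = _ * p (P + (R + P))
            rw [hPR, mul_comm]
  -- cardinality identity
  have hcardV : (Nat.card S : ℝ) * (Nat.card N : ℝ) = 4 ^ n := by
    have hfinV : Module.finrank (ZMod 2)
        ((Fin n → ZMod 2) × (Fin n → ZMod 2)) = 2 * n := by
      rw [Module.finrank_prod, Module.finrank_fintype_fun_eq_card, Fintype.card_fin]
      omega
    have hS : Fintype.card S = 2 ^ Module.finrank (ZMod 2) S := by
      have := Module.card_eq_pow_finrank (K := ZMod 2) (V := S)
      simpa using this
    have hNc : Fintype.card N = 2 ^ Module.finrank (ZMod 2) N := by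
      have := Module.card_eq_pow_finrank (K := ZMod 2) (V := N)
      simpa using this
    have hrk : Module.finrank (ZMod 2) N
        = Module.finrank (ZMod 2) ((Fin n → ZMod 2) × (Fin n → ZMod 2))
          - Module.finrank (ZMod 2) S :=
      LinearMap.BilinForm.finrank_orthogonal (Bform_nondeg n) S
    have hle : Module.finrank (ZMod 2) S
        ≤ Module.finrank (ZMod 2) ((Fin n → ZMod 2) × (Fin n → ZMod 2)) :=
      Submodule.finrank_le S
    rw [Nat.card_eq_fintype_card, Nat.card_eq_fintype_card, hS, hNc, hrk]
    rw [← Nat.cast_mul, ← pow_add, Nat.add_sub_cancel' hle, hfinV]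
    push_cast
    rw [pow_mul]
    norm_num
  have hScard : (0 : ℝ) < (Nat.card S : ℝ) := by
    exact_mod_cast (Nat.card_pos : 0 < Nat.card S)
  have hNcard : (0 : ℝ) < (Nat.card N : ℝ) := by
    exact_mod_cast (Nat.card_pos : 0 < Nat.card N)
  rw [hfilter, hmain, ← hcardV]
  field_simp
end

section
/- (Phenomenological model, syndrome pair (0,0).) For every ρ ∈ M with Π₀ * ρ * Π₀ = ρ (a codespace-supported state), one has I₀(I₀(ρ)) = (1−q)² • Λ_I(Λ_I(ρ)) + q • Λ_{IX}(Λ_I(ρ)) + (1−q)·q • Λ_{IX}(Λ_{IX}(ρ)); i.e. the unnormalized channel p(0,0)·E^{(0,0)} conditioned on observed syndromes (0,0) equals (1−q)²Λ_I² + qΛ_{IX}Λ_I + (1−q)qΛ_{IX}². -/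
/-!
Since `ZZ` commutes with `XX` and anticommutes with `IX`, compressing to a syndrome sector
intertwines the error maps: `Π_s Λ_I(σ) Π_s = Λ_I(Π_s σ Π_s)` while
`Π_s Λ_{IX}(σ) Π_s = Λ_{IX}(Π_{s+1} σ Π_{s+1})`. A codespace state therefore only feeds the `P⁰`
branch of the first measurement, giving `(1−q)Λ_I(ρ) + qΛ_{IX}(ρ)`, whose two terms lie in
sectors 0 and 1; the second measurement applies `P⁰` to the first and `P¹` to the second.
Because `Λ_I` and `Λ_{IX}` commute, the two `Λ_{IX}Λ_I` terms combine with weight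
`(1−q)q + q² = q`.
-/

open Matrix Kronecker

/-- `χ(s) = (-1)^s` for `s ∈ ZMod 2`, valued in `ℂ`. -/
noncomputable def chiC (s : ZMod 2) : ℂ := (-1 : ℂ) ^ s.val

/-- The Pauli `X` matrix. -/
noncomputable def Xm : Matrix (Fin 2) (Fin 2) ℂ := !![0, 1; 1, 0]

/-- The Pauli `Z` matrix. -/
noncomputable def Zm : Matrix (Fin 2) (Fin 2) ℂ := !![1, 0; 0, -1]

/-- The two-qubit operator `X ⊗ X` (the logical `X̄` of the `[[2,1,1]]` code). -/
noncomputable def XX : Matrix (Fin 2 × Fin 2) (Fin 2 × Fin 2) ℂ := Xm ⊗ₖ Xm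

/-- The two-qubit operator `I ⊗ X` (the pure error of the `[[2,1,1]]` code). -/
noncomputable def IX : Matrix (Fin 2 × Fin 2) (Fin 2 × Fin 2) ℂ :=
  (1 : Matrix (Fin 2) (Fin 2) ℂ) ⊗ₖ Xm

/-- The two-qubit operator `Z ⊗ Z`. -/
noncomputable def ZZ : Matrix (Fin 2 × Fin 2) (Fin 2 × Fin 2) ℂ := Zm ⊗ₖ Zm

/-- Projector onto the `(-1)^{s+1}` "syndrome-`s`" eigenspace of the
stabilizer `−ZZ` of the `[[2,1,1]]` code: `Π_s = (1/2)(1 − (-1)^s ZZ)`. -/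
noncomputable def Proj (s : ZMod 2) : Matrix (Fin 2 × Fin 2) (Fin 2 × Fin 2) ℂ :=
  (1 / 2 : ℂ) • (1 - chiC s • ZZ)

/-- Trivial-syndrome part of the phenomenological data-qubit error channel:
`Λ_I(ρ) = (1−p)² ρ + p² XXρXX`. -/
noncomputable def LamI (p : ℝ) (ρ : Matrix (Fin 2 × Fin 2) (Fin 2 × Fin 2) ℂ) :
    Matrix (Fin 2 × Fin 2) (Fin 2 × Fin 2) ℂ :=
  ((1 - p) ^ 2) • ρ + (p ^ 2) • (XX * ρ * XX)

/-- Flipped-syndrome part of the phenomenological data-qubit error channel: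
`Λ_{IX}(ρ) = (1−p)p (IX ρ IX + (IX·XX) ρ (XX·IX))`. -/
noncomputable def LamIX (p : ℝ) (ρ : Matrix (Fin 2 × Fin 2) (Fin 2 × Fin 2) ℂ) :
    Matrix (Fin 2 × Fin 2) (Fin 2 × Fin 2) ℂ :=
  ((1 - p) * p) • (IX * ρ * IX + (IX * XX) * ρ * (XX * IX))

/-- `P⁰ = (1−q)Λ_I + qΛ_{IX}`, the internal errors compatible with a correctly
read syndrome. -/
noncomputable def P0 (p q : ℝ) (ρ : Matrix (Fin 2 × Fin 2) (Fin 2 × Fin 2) ℂ) :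
    Matrix (Fin 2 × Fin 2) (Fin 2 × Fin 2) ℂ :=
  (1 - q) • LamI p ρ + q • LamIX p ρ

/-- `P¹ = qΛ_I + (1−q)Λ_{IX}`, the internal errors compatible with a flipped
syndrome bit. -/
noncomputable def P1 (p q : ℝ) (ρ : Matrix (Fin 2 × Fin 2) (Fin 2 × Fin 2) ℂ) :
    Matrix (Fin 2 × Fin 2) (Fin 2 × Fin 2) ℂ :=
  q • LamI p ρ + (1 - q) • LamIX p ρ

/-- The noisy measurement instrument of the phenomenological model:
`I_s(ρ) = P⁰(Π_s ρ Π_s) + P¹(Π_{s+1} ρ Π_{s+1})`. -/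
noncomputable def Inst (p q : ℝ) (s : ZMod 2)
    (ρ : Matrix (Fin 2 × Fin 2) (Fin 2 × Fin 2) ℂ) :
    Matrix (Fin 2 × Fin 2) (Fin 2 × Fin 2) ℂ :=
  P0 p q (Proj s * ρ * Proj s) + P1 p q (Proj (s + 1) * ρ * Proj (s + 1))

local notation "Mat₄" => Matrix (Fin 2 × Fin 2) (Fin 2 × Fin 2) ℂ

lemma Xm_mul_Xm : Xm * Xm = 1 := by
  rw [Xm, Matrix.one_fin_two]; norm_num [Matrix.mul_fin_two]

lemma Zm_mul_Zm : Zm * Zm = 1 := by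
  rw [Zm, Matrix.one_fin_two]; norm_num [Matrix.mul_fin_two]

lemma Zm_mul_Xm : Zm * Xm = -(Xm * Zm) := by
  rw [Xm, Zm]; norm_num [Matrix.mul_fin_two]

section Kronecker

variable {R l m n o : Type*} [Ring R] (A : Matrix l m R) (B : Matrix n o R)

lemma kronecker_neg : A ⊗ₖ (-B) = -(A ⊗ₖ B) := by
  ext; simp

lemma neg_kronecker_neg : (-A) ⊗ₖ (-B) = A ⊗ₖ B := by
  ext; simp

end Kronecker

lemma XX_mul_XX : XX * XX = 1 := by
  rw [XX, ← mul_kronecker_mul, Xm_mul_Xm, one_kronecker_one]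

lemma ZZ_mul_ZZ : ZZ * ZZ = 1 := by
  rw [ZZ, ← mul_kronecker_mul, Zm_mul_Zm, one_kronecker_one]

lemma commute_IX_XX : Commute IX XX := by
  rw [Commute, SemiconjBy, IX, XX, ← mul_kronecker_mul, ← mul_kronecker_mul, one_mul, mul_one]

lemma commute_ZZ_XX : Commute ZZ XX := by
  rw [Commute, SemiconjBy, ZZ, XX, ← mul_kronecker_mul, ← mul_kronecker_mul, Zm_mul_Xm,
    neg_kronecker_neg]

lemma ZZ_mul_IX : ZZ * IX = -(IX * ZZ) := by
  rw [ZZ, IX, ← mul_kronecker_mul, ← mul_kronecker_mul, one_mul, mul_one, Zm_mul_Xm,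
    kronecker_neg]

lemma ZZ_mul_IX_mul_XX : ZZ * (IX * XX) = -(IX * XX * ZZ) := by
  rw [← mul_assoc, ZZ_mul_IX, neg_mul, mul_assoc, commute_ZZ_XX.eq, mul_assoc]

lemma sandwich_sandwich_of_intertwine {α : Type*} [Semigroup α] {a b c : α}
    (hl : a * c = c * b) (hr : c * a = b * c) (x : α) : a * (c * x * c) * a = c * (b * x * b) * c :=
  calc a * (c * x * c) * a = a * c * x * (c * a) := by simp only [mul_assoc]
    _ = c * b * x * (b * c) := by rw [hl, hr]
    _ = c * (b * x * b) * c := by simp only [mul_assoc]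

lemma chiC_add_one (s : ZMod 2) : chiC (s + 1) = -chiC s := by
  obtain rfl | rfl : s = 0 ∨ s = 1 := by revert s; decide
  · simp [chiC, ZMod.val_one]
  · rw [CharTwo.add_self_eq_zero]; simp [chiC, ZMod.val_one]

lemma chiC_mul_self (s : ZMod 2) : chiC s * chiC s = 1 := by
  rw [chiC, ← pow_add, ← two_mul, pow_mul, neg_one_sq, one_pow]

section Projections

variable (s : ZMod 2) {A : Mat₄}

lemma Proj_add_one_mul : Proj (s + 1) * Proj s = 0 := by
  simp only [Proj, chiC_add_one, smul_mul_smul_comm, sub_mul, mul_sub, one_mul, mul_one,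
    neg_mul, chiC_mul_self, ZZ_mul_ZZ, neg_smul, one_smul]
  module

lemma Proj_mul_of_commute (h : Commute ZZ A) : Proj s * A = A * Proj s := by
  simp only [Proj, Matrix.smul_mul, Matrix.mul_smul, sub_mul, mul_sub, one_mul, mul_one,
    h.eq]

lemma Proj_mul_of_anticommute (h : ZZ * A = -(A * ZZ)) : Proj s * A = A * Proj (s + 1) := by
  simp only [Proj, chiC_add_one, Matrix.smul_mul, Matrix.mul_smul, sub_mul, mul_add, one_mul,
    mul_one, h, neg_smul, smul_neg, sub_neg_eq_add]

lemma mul_Proj_of_anticommute (h : ZZ * A = -(A * ZZ)) : A * Proj s = Proj (s + 1) * A := by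
  rw [Proj_mul_of_anticommute (s + 1) h, CharTwo.add_cancel_right]

end Projections

section Channels

variable (p q : ℝ) (s : ZMod 2) (σ : Mat₄)

lemma LamI_zero : LamI p 0 = 0 := by simp [LamI]

lemma LamIX_zero : LamIX p 0 = 0 := by simp [LamIX]

lemma LamI_smul (r : ℝ) : LamI p (r • σ) = r • LamI p σ := by
  simp only [LamI, Matrix.mul_smul, Matrix.smul_mul, smul_add, smul_comm _ r]

lemma LamIX_smul (r : ℝ) : LamIX p (r • σ) = r • LamIX p σ := by
  simp only [LamIX, Matrix.mul_smul, Matrix.smul_mul, smul_add, smul_comm _ r]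

lemma P0_smul (r : ℝ) : P0 p q (r • σ) = r • P0 p q σ := by
  simp only [P0, LamI_smul, LamIX_smul, smul_add, smul_comm _ r]

lemma P1_smul (r : ℝ) : P1 p q (r • σ) = r • P1 p q σ := by
  simp only [P1, LamI_smul, LamIX_smul, smul_add, smul_comm _ r]

lemma LamI_LamIX_comm : LamI p (LamIX p σ) = LamIX p (LamI p σ) := by
  have hXX (t : Mat₄) : XX * (XX * t) = t := by rw [← mul_assoc, XX_mul_XX, one_mul]
  have hXIX (t : Mat₄) : XX * (IX * t) = IX * (XX * t) := by
    rw [← mul_assoc, ← commute_IX_XX.eq, mul_assoc]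
  simp only [LamI, LamIX, mul_add, add_mul, smul_add, Matrix.mul_smul, Matrix.smul_mul,
    mul_assoc, hXX, hXIX, commute_IX_XX.eq]
  module

lemma Proj_sandwich_LamI : Proj s * LamI p σ * Proj s = LamI p (Proj s * σ * Proj s) := by
  have h := Proj_mul_of_commute s commute_ZZ_XX
  simp only [LamI, mul_add, add_mul, Matrix.mul_smul, Matrix.smul_mul,
    sandwich_sandwich_of_intertwine h h.symm]

lemma Proj_sandwich_LamIX :
    Proj s * LamIX p σ * Proj s = LamIX p (Proj (s + 1) * σ * Proj (s + 1)) := by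
  simp only [LamIX, ← commute_IX_XX.eq, mul_add, add_mul, Matrix.mul_smul, Matrix.smul_mul,
    sandwich_sandwich_of_intertwine (Proj_mul_of_anticommute s ZZ_mul_IX)
      (mul_Proj_of_anticommute s ZZ_mul_IX),
    sandwich_sandwich_of_intertwine (Proj_mul_of_anticommute s ZZ_mul_IX_mul_XX)
      (mul_Proj_of_anticommute s ZZ_mul_IX_mul_XX)]

lemma Proj_sandwich_P0 : Proj s * P0 p q σ * Proj s =
    (1 - q) • LamI p (Proj s * σ * Proj s) + q • LamIX p (Proj (s + 1) * σ * Proj (s + 1)) := by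
  simp only [P0, mul_add, add_mul, Matrix.mul_smul, Matrix.smul_mul, Proj_sandwich_LamI,
    Proj_sandwich_LamIX]

variable {s σ}

lemma Proj_add_one_sandwich_eq_zero (h : Proj s * σ * Proj s = σ) :
    Proj (s + 1) * σ * Proj (s + 1) = 0 := by
  rw [← h]
  simp only [← mul_assoc, Proj_add_one_mul, zero_mul]

lemma Inst_of_sandwich_eq (h : Proj s * σ * Proj s = σ) : Inst p q s σ = P0 p q σ := by
  simp only [Inst, h, Proj_add_one_sandwich_eq_zero h, P1, LamI_zero, LamIX_zero, smul_zero,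
    add_zero]

lemma Inst_P0_of_sandwich_eq (h : Proj s * σ * Proj s = σ) :
    Inst p q s (P0 p q σ) = (1 - q) • P0 p q (LamI p σ) + q • P1 p q (LamIX p σ) := by
  have h' : Proj (s + 1 + 1) * σ * Proj (s + 1 + 1) = σ := by rwa [CharTwo.add_cancel_right]
  rw [Inst, Proj_sandwich_P0, Proj_sandwich_P0, h, h', Proj_add_one_sandwich_eq_zero h,
    LamI_zero, LamIX_zero, smul_zero, smul_zero, add_zero, zero_add, P0_smul, P1_smul]

end Channels

/-- Phenomenological model, syndrome pair `(0,0)`: on a codespace-supported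
state, `I₀(I₀(ρ)) = (1−q)²Λ_I² + qΛ_{IX}Λ_I + (1−q)qΛ_{IX}²` applied to `ρ`. -/
theorem phenomenological_syndrome_pair_00 (p q : ℝ)
    (ρ : Matrix (Fin 2 × Fin 2) (Fin 2 × Fin 2) ℂ)
    (hρ : Proj 0 * ρ * Proj 0 = ρ) :
    Inst p q 0 (Inst p q 0 ρ)
      = ((1 - q) ^ 2) • LamI p (LamI p ρ) + q • LamIX p (LamI p ρ)
          + ((1 - q) * q) • LamIX p (LamIX p ρ) := by
  rw [Inst_of_sandwich_eq p q hρ, Inst_P0_of_sandwich_eq p q hρ, P0, P1, LamI_LamIX_comm]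
  module
end
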